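/- Let R be a commutative Noetherian ring, D a bounded chain complex of injective R-modules (D_n is injective for all n, and D_n = 0 for all but finitely many n), and F a chain complex of flat R-modules. Then every component of the tensor product complex D ⊗ F, namely (D ⊗ F)_n = ⊕_{i+j=n} D_i ⊗_R F_j, is an injective R-module. -/

import Mathlib

/-!
STATEMENT 13: Let `R` be a commutative Noetherian ring, `D` a bounded chain complex of
injective `R`-modules, and `F` a chain complex of flat `R`-modules.  Then every component
`(D ⊗ F) n = ⊕_{i + j = n} D i ⊗[R] F j` of the tensor product complex is an injective
`R`-module.
-/

universe u

open CategoryTheory MonoidalCategory Limits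

/-- Koszul signs for `ℤ`-indexed chain complexes, making `Ch(C)` monoidal. -/
instance : (ComplexShape.down ℤ).TensorSigns where
  ε' := MonoidHom.mk' Int.negOnePow Int.negOnePow_add
  rel_add p q r (hpq : q + 1 = p) := by show q + r + 1 = p + r; omega
  add_rel p q r (hpq : q + 1 = p) := by show r + q + 1 = r + p; omega
  ε'_succ p q (hpq : q + 1 = p) := by
    subst hpq
    show Int.negOnePow q = - Int.negOnePow (q + 1)
    rw [Int.negOnePow_succ, neg_neg]

variable {R : Type u} [CommRing R]

instance : (curriedTensor (ModuleCat.{u} R)).Additive where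
  map_add := by
    intros
    ext Z
    simp [curriedTensor]

/-!
Each summand `D i ⊗ F j` is injective by Baer's criterion: ideals of a Noetherian ring are finitely
presented, and for finitely presented `N` and flat `M` the canonical map
`Hom(N, E) ⊗ M → Hom(N, E ⊗ M)` is an isomorphism (five lemma applied to a presentation of `N`),
so surjectivity of restriction `Hom(R, E) → Hom(I, E)` passes to `E ⊗ M`. Boundedness of `D` leaves
only finitely many nonzero summands in `(D ⊗ F) n`, and a coproduct with finitely many nonzero
summands of injectives is injective, since its identity is a finite sum of the idempotents
`π b ≫ ι b`.
-/

open TensorProduct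

namespace TensorProduct

variable {R : Type*} [CommRing R] {N N' E M : Type*} [AddCommGroup N] [Module R N]
  [AddCommGroup N'] [Module R N'] [AddCommGroup E] [Module R E] [AddCommGroup M] [Module R M]

theorem lcomp_comp_rTensorHomToHomRTensor (h : N' →ₗ[R] N) :
    LinearMap.lcomp R (E ⊗[R] M) h ∘ₗ rTensorHomToHomRTensor (.id R) N E M =
      rTensorHomToHomRTensor (.id R) N' E M ∘ₗ (LinearMap.lcomp R E h).rTensor M := by
  ext φ m x
  simp [rTensorHomToHomRTensor_apply]

variable (R N E M) in
theorem rTensorHomToHomRTensor_bijective [Module.FinitePresentation R N] [Module.Flat R M] :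
    Function.Bijective (rTensorHomToHomRTensor (.id R) N E M) := by
  obtain ⟨n, m, p, q, hp, hqp⟩ := Module.FinitePresentation.exists_fin' R N
  have bijective_of_free (k : ℕ) :
      Function.Bijective (rTensorHomToHomRTensor (.id R) (Fin k → R) E M) := by
    rw [← rTensorHomEquivHomRTensor_toLinearMap]
    exact LinearEquiv.bijective _
  exact LinearMap.bijective_of_bijective_of_injective_of_left_exact _ _ _ _ _ _ _
    (lcomp_comp_rTensorHomToHomRTensor p) (lcomp_comp_rTensorHomToHomRTensor q)
    (Module.Flat.rTensor_exact M (LinearMap.exact_lcomp_of_exact_of_surjective E hqp hp))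
    (LinearMap.exact_lcomp_of_exact_of_surjective _ hqp hp)
    (bijective_of_free n) (bijective_of_free m).1
    (Module.Flat.rTensor_preserves_injective_linearMap _
      (LinearMap.lcomp_injective_of_surjective p hp))
    (LinearMap.lcomp_injective_of_surjective p hp)

end TensorProduct

namespace Module.Baer

variable {R : Type*} [CommRing R] [IsNoetherianRing R] {E M : Type*} [AddCommGroup E]
  [Module R E] [AddCommGroup M] [Module R M]

theorem tensorProduct_of_flat (hE : Module.Baer R E) [Module.Flat R M] :
    Module.Baer R (E ⊗[R] M) := by
  rw [Module.Baer.iff_surjective] at hE ⊢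
  intro I
  have := Module.finitePresentation_of_finite R I
  refine Function.Surjective.of_comp (g := rTensorHomToHomRTensor (.id R) R E M) ?_
  rw [← LinearMap.coe_comp, lcomp_comp_rTensorHomToHomRTensor, LinearMap.coe_comp]
  exact (rTensorHomToHomRTensor_bijective R I E M).2.comp (LinearMap.rTensor_surjective M (hE I))

end Module.Baer

namespace CategoryTheory

variable {C : Type*} [Category C] [Preadditive C] {β : Type*}

theorem Limits.Sigma.sum_π_ι_eq_id [DecidableEq β] (f : β → C) [HasCoproduct f] {S : Finset β}
    (hS : ∀ b ∉ S, IsZero (f b)) :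
    ∑ b ∈ S, Sigma.π f b ≫ Sigma.ι f b = 𝟙 (∐ f) := by
  ext b
  rw [Preadditive.comp_sum, Category.comp_id]
  by_cases hb : b ∈ S
  · rw [Finset.sum_eq_single b
      (fun b' _ hne => by rw [Sigma.ι_π_of_ne_assoc _ hne.symm, zero_comp]) (absurd hb)]
    simp
  · exact (hS b hb).eq_of_src _ _

theorem Injective.sigma_of_finite_nonzero (f : β → C) [HasCoproduct f] [∀ b, Injective (f b)]
    (hf : {b | ¬IsZero (f b)}.Finite) : Injective (∐ f) where
  factors g m _ := by
    classical
    refine ⟨∑ b ∈ hf.toFinset, factorThru (g ≫ Sigma.π f b) m ≫ Sigma.ι f b, ?_⟩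
    have hS : ∀ b ∉ hf.toFinset, IsZero (f b) := fun b hb => by simpa using hb
    calc m ≫ ∑ b ∈ hf.toFinset, factorThru (g ≫ Sigma.π f b) m ≫ Sigma.ι f b
        = g ≫ ∑ b ∈ hf.toFinset, Sigma.π f b ≫ Sigma.ι f b := by
          simp only [Preadditive.comp_sum, ← Category.assoc, comp_factorThru]
      _ = g := by rw [Sigma.sum_π_ι_eq_id f hS, Category.comp_id]

end CategoryTheory

namespace HomologicalComplex

variable {C : Type*} [Category C] [MonoidalCategory C] [Preadditive C] [HasZeroObject C]
  [(curriedTensor C).Additive] [∀ X : C, ((curriedTensor C).obj X).Additive]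
  {I : Type*} [AddMonoid I] [IsLeftCancelAdd I] [DecidableEq I] {c : ComplexShape I}
  [c.TensorSigns]

theorem injective_tensorObj_X (K L : HomologicalComplex C c) [HasTensor K L]
    (hinj : ∀ i j, Injective (K.X i ⊗ L.X j)) (hK : {i | ¬IsZero (K.X i)}.Finite) (n : I) :
    Injective ((tensorObj K L).X n) := by
  have hzero (i j : I) (hi : IsZero (K.X i)) : IsZero (K.X i ⊗ L.X j) :=
    ((curriedTensor C).map_isZero hi).obj (L.X j)
  have hfst : Function.Injective (fun b : c.π c c ⁻¹' {n} => b.1.1) := by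
    rintro ⟨⟨i, j⟩, hb : i + j = n⟩ ⟨⟨i', j'⟩, hb' : i' + j' = n⟩ (rfl : i = i')
    obtain rfl : j = j' := add_left_cancel (hb.trans hb'.symm)
    rfl
  exact @Injective.sigma_of_finite_nonzero _ _ _ _ _ _ (fun _ => hinj _ _)
    ((hK.preimage hfst.injOn).subset fun _ hb hz => hb (hzero _ _ hz))

end HomologicalComplex

theorem injective_components_of_tensor_bounded_injectives_with_flats
    [IsNoetherianRing R]
    (D F : ChainComplex (ModuleCat.{u} R) ℤ)
    (hDinj : ∀ n, Module.Injective R (D.X n))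
    (hDbdd : {n : ℤ | ¬ IsZero (D.X n)}.Finite)
    (hFflat : ∀ n, Module.Flat R (F.X n)) (n : ℤ) :
    Module.Injective R ((HomologicalComplex.tensorObj D F).X n) := by
  have hinj (i j : ℤ) : Injective (D.X i ⊗ F.X j) := by
    have := hFflat j
    exact (Module.injective_iff_injective_object R _).mp
      (Module.Baer.of_injective (hDinj i)).tensorProduct_of_flat.injective
  exact (Module.injective_iff_injective_object R _).mpr
    (HomologicalComplex.injective_tensorObj_X D F hinj hDbdd n)
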